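/- (Theorem 1, asymptotic stability form.) Assume A_q = exp(hH), Q − P + A_qᵀ P A_q is negative definite, and H is Hurwitz (every eigenvalue of H, regarded over ℂ, has strictly negative real part). Then along every quantized MPC closed-loop trajectory (x_q(k), r(k), U*(k)) one has x_q(k) → 0 as k → ∞. -/

import Mathlib

open Matrix Filter Topology

/-- Predicted states of the quantized system: `x₀ = x`, `x_{i+1} = A_q x_i + h B_q u_i`
(inputs beyond the horizon are taken to be `0`, but they are never used below). -/
noncomputable def predState {n m N : ℕ} (Aq : Matrix (Fin n) (Fin n) ℝ)
    (Bq : Matrix (Fin n) (Fin m) ℝ) (h : ℝ) (x : Fin n → ℝ)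
    (U : Fin N → Fin m → ℝ) : ℕ → (Fin n → ℝ)
  | 0 => x
  | i + 1 => Aq *ᵥ (predState Aq Bq h x U i) +
      h • (Bq *ᵥ (if hi : i < N then U ⟨i, hi⟩ else 0))

/-- Reference states: `r_i = (exp (h H))^i r`. -/
noncomputable def refState {n : ℕ} (H : Matrix (Fin n) (Fin n) ℝ) (h : ℝ)
    (r : Fin n → ℝ) (i : ℕ) : Fin n → ℝ :=
  ((NormedSpace.exp (h • H)) ^ i) *ᵥ r

/-- The MPC cost
`J(x, r, U) = (x_N - r_N)ᵀ P (x_N - r_N) + Σ_{i<N} [(x_i - r_i)ᵀ Q (x_i - r_i) + u_iᵀ R u_i]`. -/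
noncomputable def mpcCost {n m N : ℕ} (Aq : Matrix (Fin n) (Fin n) ℝ)
    (Bq : Matrix (Fin n) (Fin m) ℝ) (H : Matrix (Fin n) (Fin n) ℝ) (h : ℝ)
    (P Q : Matrix (Fin n) (Fin n) ℝ) (R : Matrix (Fin m) (Fin m) ℝ)
    (x r : Fin n → ℝ) (U : Fin N → Fin m → ℝ) : ℝ :=
  (predState Aq Bq h x U N - refState H h r N) ⬝ᵥ
      (P *ᵥ (predState Aq Bq h x U N - refState H h r N)) +
    ∑ i : Fin N,
      ((predState Aq Bq h x U i - refState H h r i) ⬝ᵥ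
          (Q *ᵥ (predState Aq Bq h x U i - refState H h r i)) +
        (U i) ⬝ᵥ (R *ᵥ (U i)))

/-- The quantized input set `𝒰^N` with `𝒰 = {-1,0,1}^m`. -/
def quantSet (m N : ℕ) : Set (Fin N → Fin m → ℝ) :=
  {U | ∀ i j, U i j = -1 ∨ U i j = 0 ∨ U i j = 1}

/-- The value function `V(x,r) = min_{U ∈ 𝒰^N} J(x,r,U)`. -/
noncomputable def valueFn {n m N : ℕ} (Aq : Matrix (Fin n) (Fin n) ℝ)
    (Bq : Matrix (Fin n) (Fin m) ℝ) (H : Matrix (Fin n) (Fin n) ℝ) (h : ℝ)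
    (P Q : Matrix (Fin n) (Fin n) ℝ) (R : Matrix (Fin m) (Fin m) ℝ)
    (x r : Fin n → ℝ) : ℝ :=
  sInf ((fun U => mpcCost Aq Bq H h P Q R x r U) '' quantSet m N)

/-- The shifted input sequence: drop `u₀` and append `0`. -/
def shiftSeq {m N : ℕ} (U : Fin N → Fin m → ℝ) : Fin N → Fin m → ℝ :=
  fun i => if hi : (i : ℕ) + 1 < N then U ⟨(i : ℕ) + 1, hi⟩ else 0


/-!
The tracking cost `V k = J(x_q k, r k, U* k)` decreases along the closed loop: the shifted
sequence `(u₁*, …, u_{N-1}*, 0)` is admissible at time `k + 1`, and since the plant and the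
reference are propagated by the same matrix `A = exp (h H)`, the extra terminal stage costs
`(A e)ᵀ P (A e) + eᵀ Q e - eᵀ P e ≤ 0`. Hence `V (k + 1) + (x_q k - r k)ᵀ Q (x_q k - r k) ≤ V k`,
the tracking errors are summable, and `x_q k - r k → 0`. Finally, every eigenvalue of `exp (h H)`
is `exp (h μ)` for an eigenvalue `μ` of `H`, so Hurwitz stability puts the spectrum of
`exp (h H)` inside the open unit disc and Gelfand's formula gives `r k = exp (h H) ^ k r 0 → 0`.
-/

open NormedSpace

namespace spectrum

theorem tendsto_pow_atTop_nhds_zero_of_spectralRadius_lt_one {A : Type*} [NormedRing A]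
    [NormedAlgebra ℂ A] [CompleteSpace A] {a : A} (ha : spectralRadius ℂ a < 1) :
    Tendsto (fun k : ℕ => a ^ k) atTop (𝓝 0) := by
  obtain ⟨c, hac, hc1⟩ := ENNReal.lt_iff_exists_nnreal_btwn.mp ha
  have hbound : ∀ᶠ k : ℕ in atTop, ‖a ^ k‖₊ ≤ c ^ k := by
    filter_upwards [(pow_nnnorm_pow_one_div_tendsto_nhds_spectralRadius a).eventually_lt_const hac,
      eventually_ne_atTop 0] with k hk hk0
    have := ENNReal.rpow_le_rpow hk.le (Nat.cast_nonneg k)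
    rw [← ENNReal.rpow_mul, one_div_mul_cancel (Nat.cast_ne_zero.mpr hk0), ENNReal.rpow_one,
      ENNReal.rpow_natCast] at this
    exact_mod_cast this
  have hc : Tendsto (fun k : ℕ => (c : ℝ) ^ k) atTop (𝓝 0) :=
    tendsto_pow_atTop_nhds_zero_of_lt_one c.2 (by exact_mod_cast hc1)
  refine tendsto_zero_iff_norm_tendsto_zero.mpr
    (squeeze_zero' (.of_forall fun _ => norm_nonneg _) (hbound.mono fun k hk => ?_) hc)
  exact_mod_cast hk

theorem tendsto_pow_atTop_nhds_zero_of_forall_norm_lt_one {A : Type*} [NormedRing A]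
    [NormedAlgebra ℂ A] [CompleteSpace A] {a : A} (ha : ∀ c ∈ spectrum ℂ a, ‖c‖ < 1) :
    Tendsto (fun k : ℕ => a ^ k) atTop (𝓝 0) := by
  rcases subsingleton_or_nontrivial A with hA | hA
  · exact tendsto_const_nhds.congr fun _ => Subsingleton.elim _ _
  refine tendsto_pow_atTop_nhds_zero_of_spectralRadius_lt_one ?_
  simpa using spectralRadius_lt_of_forall_lt_of_nonempty (spectrum.nonempty a)
    (r := 1) fun c hc => by exact_mod_cast ha c hc

end spectrum

namespace Module.End

variable {K V : Type*} [Field K] [IsAlgClosed K] [AddCommGroup V] [Module K V]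
  [FiniteDimensional K V]

theorem exists_hasEigenvector_of_commute {f g : End K V} (hfg : Commute f g) {c : K}
    (hc : f.HasEigenvalue c) : ∃ μ v, f.HasEigenvector c v ∧ g.HasEigenvector μ v := by
  have hmaps : ∀ v ∈ f.eigenspace c, g v ∈ f.eigenspace c :=
    fun v hv => mapsTo_genEigenspace_of_comm hfg c 1 hv
  have : Nontrivial (f.eigenspace c) := Submodule.nontrivial_iff_ne_bot.mpr hc
  obtain ⟨μ, hμ⟩ := exists_eigenvalue (g.restrict hmaps)
  obtain ⟨w, hw⟩ := hμ.exists_hasEigenvector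
  refine ⟨μ, w, ⟨w.2, by simpa using hw.2⟩, ?_, by simpa using hw.2⟩
  exact eigenspace_restrict_le_eigenspace g hmaps μ ⟨w, hw.1, rfl⟩

end Module.End

namespace Matrix

theorem dotProduct_mulVec_add_le_of_posSemidef {ι : Type*} [Fintype ι] {A P Q : Matrix ι ι ℝ}
    (hPQ : (-(Q - P + Aᵀ * P * A)).PosSemidef) (v : ι → ℝ) :
    (A *ᵥ v) ⬝ᵥ (P *ᵥ (A *ᵥ v)) + v ⬝ᵥ (Q *ᵥ v) ≤ v ⬝ᵥ (P *ᵥ v) := by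
  have hconj : (A *ᵥ v) ⬝ᵥ (P *ᵥ (A *ᵥ v)) = v ⬝ᵥ ((Aᵀ * P * A) *ᵥ v) := by
    rw [← mulVec_mulVec, ← mulVec_mulVec, dotProduct_mulVec v, vecMul_transpose]
  have := hPQ.dotProduct_mulVec_nonneg v
  simp only [star_trivial, neg_mulVec, add_mulVec, sub_mulVec, dotProduct_neg, dotProduct_add,
    dotProduct_sub] at this
  linarith

variable {ι : Type*} [Fintype ι] [DecidableEq ι]

theorem exp_mulVec_of_mulVec_eq_smul {M : Matrix ι ι ℂ} {μ : ℂ} {v : ι → ℂ}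
    (hv : M *ᵥ v = μ • v) : exp M *ᵥ v = Complex.exp μ • v := by
  let _ := Matrix.linftyOpNormedRing (n := ι) (α := ℂ)
  let _ := Matrix.linftyOpNormedAlgebra (n := ι) (R := ℂ) (α := ℂ)
  have hpow : ∀ k : ℕ, M ^ k *ᵥ v = μ ^ k • v := by
    intro k
    induction k with
    | zero => simp
    | succ k ih => rw [pow_succ', ← mulVec_mulVec, ih, mulVec_smul, hv, smul_smul, pow_succ]
  have hM := (exp_series_hasSum_exp' (𝕂 := ℂ) M).map (mulVec.addMonoidHomLeft v)
    (continuous_id.matrix_mulVec continuous_const)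
  have hμ := (exp_series_hasSum_exp' (𝕂 := ℂ) μ).smul_const v
  refine hM.unique ?_
  rw [Complex.exp_eq_exp_ℂ]
  convert hμ using 2 with k
  change ((k.factorial : ℂ)⁻¹ • M ^ k) *ᵥ v = _
  rw [smul_mulVec, hpow, smul_smul, smul_eq_mul]

theorem exists_eq_exp_of_mem_spectrum_exp {M : Matrix ι ι ℂ} {c : ℂ}
    (hc : c ∈ spectrum ℂ (exp M)) : ∃ μ ∈ spectrum ℂ M, c = Complex.exp μ := by
  rw [← AlgEquiv.spectrum_eq toLinAlgEquiv', ← Module.End.hasEigenvalue_iff_mem_spectrum] at hc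
  have hcomm : Commute (toLinAlgEquiv' (exp M)) (toLinAlgEquiv' M) :=
    ((Commute.refl M).exp_left).map _
  obtain ⟨μ, v, hv_exp, hv⟩ := Module.End.exists_hasEigenvector_of_commute hcomm hc
  refine ⟨μ, ?_, ?_⟩
  · rw [← AlgEquiv.spectrum_eq toLinAlgEquiv', ← Module.End.hasEigenvalue_iff_mem_spectrum]
    exact Module.End.hasEigenvalue_of_hasEigenvector hv
  · have h1 : exp M *ᵥ v = c • v := hv_exp.apply_eq_smul
    have h2 : exp M *ᵥ v = Complex.exp μ • v := exp_mulVec_of_mulVec_eq_smul hv.apply_eq_smul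
    exact smul_left_injective ℂ hv.2 (h1.symm.trans h2)

theorem tendsto_pow_atTop_nhds_zero_of_forall_norm_lt_one {M : Matrix ι ι ℂ}
    (hM : ∀ c ∈ spectrum ℂ M, ‖c‖ < 1) : Tendsto (fun k : ℕ => M ^ k) atTop (𝓝 0) :=
  letI := Matrix.linftyOpNormedRing (n := ι) (α := ℂ)
  letI := Matrix.linftyOpNormedAlgebra (n := ι) (R := ℂ) (α := ℂ)
  spectrum.tendsto_pow_atTop_nhds_zero_of_forall_norm_lt_one hM

theorem exp_map_ofReal (A : Matrix ι ι ℝ) :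
    (exp A).map Complex.ofReal = exp (A.map Complex.ofReal) :=
  letI := Matrix.linftyOpNormedRing (n := ι) (α := ℝ)
  letI := Matrix.linftyOpNormedRing (n := ι) (α := ℂ)
  letI := Matrix.linftyOpNormedAlgebra (n := ι) (R := ℝ) (α := ℝ)
  letI := Matrix.linftyOpNormedAlgebra (n := ι) (R := ℂ) (α := ℂ)
  letI := NormedAlgebra.restrictScalars ℚ ℝ (Matrix ι ι ℝ)
  map_exp Complex.ofRealHom.mapMatrix (continuous_id.matrix_map Complex.continuous_ofReal) A

theorem tendsto_exp_smul_pow_of_forall_re_neg {H : Matrix ι ι ℝ} {h : ℝ} (hh : 0 < h)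
    (hH : ∀ μ ∈ spectrum ℂ (H.map Complex.ofReal), μ.re < 0) :
    Tendsto (fun k : ℕ => exp (h • H) ^ k) atTop (𝓝 0) := by
  have hspec : ∀ c ∈ spectrum ℂ (exp ((h • H).map Complex.ofReal)), ‖c‖ < 1 := by
    intro c hc
    obtain ⟨μ, hμ, rfl⟩ := exists_eq_exp_of_mem_spectrum_exp hc
    have hsmul : (h • H).map Complex.ofReal =
        Units.mk0 (h : ℂ) (by exact_mod_cast hh.ne') • H.map Complex.ofReal := by
      ext
      simp [Units.smul_def]
    rw [hsmul, spectrum.unit_smul_eq_smul] at hμ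
    obtain ⟨μ, hμ, rfl⟩ := hμ
    rw [Complex.norm_exp, Real.exp_lt_one_iff]
    simpa [Units.smul_def] using mul_neg_of_pos_of_neg hh (hH μ hμ)
  have hre : Continuous fun M : Matrix ι ι ℂ => M.map Complex.re :=
    continuous_id.matrix_map Complex.continuous_re
  have hpow : ∀ k : ℕ, exp (h • H) ^ k = (exp ((h • H).map Complex.ofReal) ^ k).map Complex.re := by
    intro k
    rw [← exp_map_ofReal]
    change _ = (Complex.ofRealHom.mapMatrix (exp (h • H)) ^ k).map Complex.re
    rw [← map_pow]
    ext
    simp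
  convert (hre.tendsto 0).comp (tendsto_pow_atTop_nhds_zero_of_forall_norm_lt_one hspec) using 1
  · exact funext hpow
  · simp

end Matrix

theorem tendsto_atTop_nhds_zero_of_succ_le_sub {V g : ℕ → ℝ} (hV : ∀ k, 0 ≤ V k)
    (hg : ∀ k, 0 ≤ g k) (hdec : ∀ k, V (k + 1) + g k ≤ V k) : Tendsto g atTop (𝓝 0) := by
  have hsum : ∀ K, ∑ k ∈ Finset.range K, g k + V K ≤ V 0 := by
    intro K
    induction K with
    | zero => simp
    | succ K ih => rw [Finset.sum_range_succ]; linarith [hdec K]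
  exact (summable_of_sum_range_le hg fun K => by linarith [hsum K, hV K]).tendsto_atTop_zero

namespace Matrix.PosDef

variable {ι : Type*} [Fintype ι] {Q : Matrix ι ι ℝ}

theorem exists_mul_norm_sq_le (hQ : Q.PosDef) :
    ∃ c > 0, ∀ x : ι → ℝ, c * ‖x‖ ^ 2 ≤ x ⬝ᵥ (Q *ᵥ x) := by
  rcases isEmpty_or_nonempty ι with hι | hι
  · exact ⟨1, one_pos, fun x => by simp [Subsingleton.elim x 0]⟩
  have hcont : Continuous fun x : ι → ℝ => x ⬝ᵥ (Q *ᵥ x) :=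
    continuous_id.dotProduct (continuous_const.matrix_mulVec continuous_id)
  obtain ⟨x₀, hx₀, hmin⟩ := (isCompact_sphere (0 : ι → ℝ) 1).exists_isMinOn
    (NormedSpace.sphere_nonempty.mpr zero_le_one) hcont.continuousOn
  have hx₀0 : x₀ ≠ 0 := ne_zero_of_mem_unit_sphere ⟨x₀, hx₀⟩
  refine ⟨x₀ ⬝ᵥ (Q *ᵥ x₀), by simpa using hQ.dotProduct_mulVec_pos hx₀0, fun x => ?_⟩
  rcases eq_or_ne x 0 with rfl | hx
  · simp
  have hnx : 0 < ‖x‖ := norm_pos_iff.mpr hx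
  have hy : ‖x‖⁻¹ • x ∈ Metric.sphere (0 : ι → ℝ) 1 := by
    simp [norm_smul, hnx.ne']
  have key : x₀ ⬝ᵥ (Q *ᵥ x₀) ≤ (‖x‖⁻¹ • x) ⬝ᵥ (Q *ᵥ (‖x‖⁻¹ • x)) := hmin hy
  simp only [mulVec_smul, dotProduct_smul, smul_dotProduct, smul_eq_mul] at key
  calc x₀ ⬝ᵥ (Q *ᵥ x₀) * ‖x‖ ^ 2 ≤ ‖x‖⁻¹ * (‖x‖⁻¹ * x ⬝ᵥ (Q *ᵥ x)) * ‖x‖ ^ 2 := by gcongr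
    _ = x ⬝ᵥ (Q *ᵥ x) := by field_simp

theorem tendsto_zero_of_tendsto_dotProduct_mulVec (hQ : Q.PosDef) {α : Type*} {l : Filter α}
    {x : α → ι → ℝ} (hx : Tendsto (fun a => x a ⬝ᵥ (Q *ᵥ x a)) l (𝓝 0)) :
    Tendsto x l (𝓝 0) := by
  obtain ⟨c, hc, hcQ⟩ := hQ.exists_mul_norm_sq_le
  have hsq : Tendsto (fun a => ‖x a‖ ^ 2) l (𝓝 0) :=
    squeeze_zero (fun _ => by positivity) (fun a => (le_div_iff₀' hc).mpr (hcQ (x a)))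
      (by simpa using hx.div_const c)
  have := hsq.sqrt
  simpa [Real.sqrt_sq (norm_nonneg _), tendsto_zero_iff_norm_tendsto_zero] using this

end Matrix.PosDef

section MPC

variable {n m N : ℕ} (H : Matrix (Fin n) (Fin n) ℝ) (Bq : Matrix (Fin n) (Fin m) ℝ) (h : ℝ)

theorem predState_shiftSeq (hN : 0 < N) (x : Fin n → ℝ) (U : Fin N → Fin m → ℝ) (i : ℕ) :
    predState (exp (h • H)) Bq h (exp (h • H) *ᵥ x + h • (Bq *ᵥ U ⟨0, hN⟩)) (shiftSeq U) i =
      predState (exp (h • H)) Bq h x U (i + 1) := by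
  induction i with
  | zero => simp [predState, hN]
  | succ i ih =>
    rw [predState.eq_2, ih, predState.eq_2 _ _ _ _ _ (i + 1)]
    congr 3
    by_cases hi : i + 1 < N
    · simp [hi, i.lt_succ_self.trans hi, shiftSeq]
    · simp [hi, shiftSeq]

theorem predState_succ_of_le {Aq : Matrix (Fin n) (Fin n) ℝ} (x : Fin n → ℝ)
    (U : Fin N → Fin m → ℝ) {i : ℕ} (hi : N ≤ i) :
    predState Aq Bq h x U (i + 1) = Aq *ᵥ predState Aq Bq h x U i := by
  simp [predState, not_lt.mpr hi]

theorem refState_succ (r : Fin n → ℝ) (i : ℕ) :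
    refState H h r (i + 1) = exp (h • H) *ᵥ refState H h r i := by
  simp [refState, pow_succ', mulVec_mulVec]

theorem refState_mulVec (r : Fin n → ℝ) (i : ℕ) :
    refState H h (exp (h • H) *ᵥ r) i = refState H h r (i + 1) := by
  simp [refState, pow_succ, mulVec_mulVec]

theorem shiftSeq_mem_quantSet {U : Fin N → Fin m → ℝ} (hU : U ∈ quantSet m N) :
    shiftSeq U ∈ quantSet m N := by
  intro i j
  unfold shiftSeq
  split_ifs
  · exact hU _ j
  · simp

theorem shiftSeq_castSucc {N : ℕ} (U : Fin (N + 1) → Fin m → ℝ) (i : Fin N) :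
    shiftSeq U i.castSucc = U i.succ := by
  simp [shiftSeq, Fin.succ]

theorem shiftSeq_last {N : ℕ} (U : Fin (N + 1) → Fin m → ℝ) : shiftSeq U (Fin.last N) = 0 := by
  simp [shiftSeq]

theorem mpcCost_nonneg (Aq : Matrix (Fin n) (Fin n) ℝ) {P Q : Matrix (Fin n) (Fin n) ℝ}
    {R : Matrix (Fin m) (Fin m) ℝ} (hP : P.PosSemidef) (hQ : Q.PosSemidef) (hR : R.PosSemidef)
    (x r : Fin n → ℝ) (U : Fin N → Fin m → ℝ) : 0 ≤ mpcCost Aq Bq H h P Q R x r U := by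
  have hquad {k : ℕ} {M : Matrix (Fin k) (Fin k) ℝ} (hM : M.PosSemidef) (v : Fin k → ℝ) :
      0 ≤ v ⬝ᵥ (M *ᵥ v) := by simpa using hM.dotProduct_mulVec_nonneg v
  exact add_nonneg (hquad hP _) <| Finset.sum_nonneg fun i _ => add_nonneg (hquad hQ _) (hquad hR _)

theorem mpcCost_shiftSeq_add_le (hN : 0 < N) {P Q : Matrix (Fin n) (Fin n) ℝ}
    {R : Matrix (Fin m) (Fin m) ℝ} (hR : R.PosSemidef)
    (hPQ : (-(Q - P + (exp (h • H))ᵀ * P * exp (h • H))).PosSemidef)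
    (x r : Fin n → ℝ) (U : Fin N → Fin m → ℝ) :
    mpcCost (exp (h • H)) Bq H h P Q R (exp (h • H) *ᵥ x + h • (Bq *ᵥ U ⟨0, hN⟩))
        (exp (h • H) *ᵥ r) (shiftSeq U) + (x - r) ⬝ᵥ (Q *ᵥ (x - r)) ≤
      mpcCost (exp (h • H)) Bq H h P Q R x r U := by
  set A := exp (h • H)
  set e : ℕ → Fin n → ℝ := fun i => predState A Bq h x U i - refState H h r i with he
  have he' : ∀ i, predState A Bq h (A *ᵥ x + h • (Bq *ᵥ U ⟨0, hN⟩)) (shiftSeq U) i -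
      refState H h (A *ᵥ r) i = e (i + 1) := fun i => by
    rw [predState_shiftSeq, refState_mulVec]
  have heN : e (N + 1) = A *ᵥ e N := by
    simp only [he, predState_succ_of_le _ _ _ _ le_rfl, refState_succ, mulVec_sub, A]
  have hterm := dotProduct_mulVec_add_le_of_posSemidef hPQ (e N)
  have he0 : e 0 = x - r := by simp [he, predState, refState]
  obtain ⟨N, rfl⟩ := Nat.exists_eq_add_one_of_ne_zero hN.ne'
  have hJ : mpcCost A Bq H h P Q R x r U = e (N + 1) ⬝ᵥ (P *ᵥ e (N + 1)) +
      (e 0 ⬝ᵥ (Q *ᵥ e 0) + U 0 ⬝ᵥ (R *ᵥ U 0)) +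
      ∑ i : Fin N, (e (i + 1) ⬝ᵥ (Q *ᵥ e (i + 1)) + U i.succ ⬝ᵥ (R *ᵥ U i.succ)) := by
    rw [mpcCost, Fin.sum_univ_succ]
    simp only [add_assoc]
    rfl
  have hJ' : mpcCost A Bq H h P Q R (A *ᵥ x + h • (Bq *ᵥ U ⟨0, hN⟩)) (A *ᵥ r) (shiftSeq U) =
      (A *ᵥ e (N + 1)) ⬝ᵥ (P *ᵥ (A *ᵥ e (N + 1))) +
      ∑ i : Fin N, (e (i + 1) ⬝ᵥ (Q *ᵥ e (i + 1)) + U i.succ ⬝ᵥ (R *ᵥ U i.succ)) +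
      e (N + 1) ⬝ᵥ (Q *ᵥ e (N + 1)) := by
    simp only [mpcCost, he', heN, Fin.sum_univ_castSucc, shiftSeq_castSucc, shiftSeq_last]
    simp [add_assoc]
  have hR0 : 0 ≤ U 0 ⬝ᵥ (R *ᵥ U 0) := by simpa using hR.dotProduct_mulVec_nonneg (U 0)
  rw [hJ, hJ', ← he0]
  linarith

end MPC

/-- Theorem 1, asymptotic stability form: if in addition `H` is Hurwitz,
then along any quantized MPC closed-loop trajectory `x_q(k) → 0`. -/
theorem stmt5 {n m N : ℕ} (hN : 0 < N) (h : ℝ) (hh : 0 < h)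
    (Aq H : Matrix (Fin n) (Fin n) ℝ) (Bq : Matrix (Fin n) (Fin m) ℝ)
    (P Q : Matrix (Fin n) (Fin n) ℝ) (R : Matrix (Fin m) (Fin m) ℝ)
    (hP : P.PosDef) (hQ : Q.PosDef) (hR : R.PosDef)
    (hA : Aq = NormedSpace.exp (h • H))
    (hneg : (-(Q - P + Aqᵀ * P * Aq)).PosDef)
    (hHurwitz : ∀ μ ∈ spectrum ℂ (H.map (Complex.ofReal)), μ.re < 0)
    (xq r : ℕ → (Fin n → ℝ)) (Ustar : ℕ → (Fin N → Fin m → ℝ))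
    (hmem : ∀ k, Ustar k ∈ quantSet m N)
    (hmin : ∀ k, ∀ U ∈ quantSet m N,
      mpcCost Aq Bq H h P Q R (xq k) (r k) (Ustar k) ≤
        mpcCost Aq Bq H h P Q R (xq k) (r k) U)
    (hx : ∀ k, xq (k + 1) = Aq *ᵥ xq k + h • (Bq *ᵥ Ustar k ⟨0, hN⟩))
    (hr : ∀ k, r (k + 1) = NormedSpace.exp (h • H) *ᵥ r k) :
    Filter.Tendsto xq Filter.atTop (nhds 0) := by
  subst hA
  set V : ℕ → ℝ := fun k => mpcCost (exp (h • H)) Bq H h P Q R (xq k) (r k) (Ustar k)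
  have hdecrease : ∀ k, V (k + 1) + (xq k - r k) ⬝ᵥ (Q *ᵥ (xq k - r k)) ≤ V k := fun k => by
    have hshift := mpcCost_shiftSeq_add_le H Bq h hN hR.posSemidef hneg.posSemidef
      (xq k) (r k) (Ustar k)
    rw [← hx k, ← hr k] at hshift
    exact (add_le_add_left (hmin (k + 1) _ (shiftSeq_mem_quantSet (hmem k))) _).trans hshift
  have herror : Tendsto (fun k => xq k - r k) atTop (𝓝 0) :=
    hQ.tendsto_zero_of_tendsto_dotProduct_mulVec <| tendsto_atTop_nhds_zero_of_succ_le_sub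
      (fun k => mpcCost_nonneg H Bq h _ hP.posSemidef hQ.posSemidef hR.posSemidef _ _ _)
      (fun k => by simpa using hQ.posSemidef.dotProduct_mulVec_nonneg (xq k - r k)) hdecrease
  have hr_pow : r = fun k => exp (h • H) ^ k *ᵥ r 0 := funext fun k => by
    induction k with
    | zero => simp
    | succ k ih => rw [hr k, ih, mulVec_mulVec, pow_succ']
  have href : Tendsto r atTop (𝓝 0) := by
    rw [hr_pow]
    have := ((continuous_id.matrix_mulVec (continuous_const (y := r 0))).tendsto 0).comp
      (Matrix.tendsto_exp_smul_pow_of_forall_re_neg hh hHurwitz)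
    simpa [Function.comp_def] using this
  simpa using herror.add href
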